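/- Let n ≥ 1 and let x ∈ [0,1]^n with x_j ≠ 1/2 for every j, and suppose exactly l of the entries of x are less than 1/2. Let y = low-high(sort(x)) ∈ [0,1]^{n+1}. Then harden(y) is the one-hot vector whose unique high entry is at index l + 1: harden(y_k) = 1 if k = l + 1 and harden(y_k) = 0 otherwise. Hence ∂count-hot(x) = low-high(sort(x)) is hard-equivalent to the one-hot boolean encoding of the number of low input bits. -/
import Mathlib


/-- `harden` maps a soft-bit to a hard-bit: 1 if `x > 1/2`, else 0. -/
noncomputable def harden (x : ℝ) : ℕ := if x > 1/2 then 1 else 0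

/-- `augmentedBit x i = 1/2 + x̄·|x i − 1/2|` if `x i > 1/2`, else `x i + x̄·|x i − 1/2|`,
where `x̄` is the mean of the entries of `x`. -/
noncomputable def augmentedBit {n : ℕ} (x : Fin n → ℝ) (i : Fin n) : ℝ :=
  let xbar := (∑ j, x j) / n
  let mf := xbar * |x i - 1/2|
  if x i > 1/2 then 1/2 + mf else x i + mf

/-- `∂∧(a,b)`: the augmented bit of the two-element vector `[a,b]` at an index of a minimal
entry. -/
noncomputable def dAnd (a b : ℝ) : ℝ := augmentedBit ![a, b] (if a ≤ b then 0 else 1)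

/-- `low-high(x) = [∂∧(1, x₁), ∂∧(1 − x₁, x₂), …, ∂∧(1 − x_{n−1}, x_n), ∂∧(1 − x_n, 1)]`
(written with 0-based indexing over `Fin (n+1)`). -/
noncomputable def lowHigh {n : ℕ} (x : Fin n → ℝ) : Fin (n + 1) → ℝ := fun k =>
  dAnd (if h : (k : ℕ) = 0 then 1 else 1 - x ⟨(k : ℕ) - 1, by have := k.isLt; omega⟩)
       (if h : (k : ℕ) < n then x ⟨(k : ℕ), h⟩ else 1)

lemma harden_min (m s : ℝ) (hms : m ≤ s/2) (hs1 : s/2 ≤ 1) (hmne : m ≠ 1/2) :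
    harden (if m > 1/2 then 1/2 + s/2 * |m - 1/2| else m + s/2 * |m - 1/2|) =
      if 1/2 < m then 1 else 0 := by
  unfold harden
  rcases lt_or_gt_of_ne hmne with h | h
  · rw [if_neg (show ¬ m > 1/2 by linarith), abs_of_nonpos (by linarith),
      if_neg (show ¬ m + s/2 * -(m - 1/2) > 1/2 by nlinarith), if_neg (by linarith)]
  · rw [if_pos (show m > 1/2 from h), abs_of_pos (by linarith),
      if_pos (show 1/2 + s/2 * (m - 1/2) > 1/2 by nlinarith), if_pos h]

lemma harden_dAnd (a b : ℝ) (ha0 : 0 ≤ a) (ha1 : a ≤ 1) (hb0 : 0 ≤ b) (hb1 : b ≤ 1)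
    (hane : a ≠ 1/2) (hbne : b ≠ 1/2) :
    harden (dAnd a b) = if 1/2 < a ∧ 1/2 < b then 1 else 0 := by
  unfold dAnd augmentedBit
  have h2 : (((Nat.succ 0).succ : ℕ) : ℝ) = 2 := by norm_num
  by_cases hab : a ≤ b
  · simp only [if_pos hab, Fin.sum_univ_two, Matrix.cons_val_zero, Matrix.cons_val_one,
      Matrix.head_cons, h2]
    rw [harden_min a (a+b) (by linarith) (by linarith) hane,
      if_congr (show (1/2 < a ↔ 1/2 < a ∧ 1/2 < b) by
        constructor <;> intro h <;> [exact ⟨h, by linarith⟩; exact h.1]) rfl rfl]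
  · push_neg at hab
    simp only [if_neg (not_le.2 hab), Fin.sum_univ_two, Matrix.cons_val_zero, Matrix.cons_val_one,
      Matrix.head_cons, h2]
    rw [harden_min b (a+b) (by linarith) (by linarith) hbne,
      if_congr (show (1/2 < b ↔ 1/2 < a ∧ 1/2 < b) by
        constructor <;> intro h <;> [exact ⟨by linarith, h⟩; exact h.2]) rfl rfl]

/-- Hardening `∂count-hot(x) = low-high(sort x)` yields the one-hot vector whose unique high
entry is at (1-based) index `l + 1`, where `l` is the number of low entries of `x`
(0-based index `l` here). -/
theorem stmt10 (n : ℕ) (hn : 1 ≤ n) (x : Fin n → ℝ) (hx : ∀ j, x j ∈ Set.Icc (0:ℝ) 1)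
    (hx2 : ∀ j, x j ≠ 1/2)
    (l : ℕ) (hl : l = (Finset.univ.filter (fun j => x j < 1/2)).card)
    (y : Fin n → ℝ) (σ : Equiv.Perm (Fin n)) (hy : y = x ∘ σ) (hmono : Monotone y) :
    ∀ k : Fin (n + 1), harden (lowHigh y k) = if (k : ℕ) = l then 1 else 0 := by
  have hy0 : ∀ j, 0 ≤ y j := fun j => by rw [hy]; exact (hx (σ j)).1
  have hy1 : ∀ j, y j ≤ 1 := fun j => by rw [hy]; exact (hx (σ j)).2
  have hyne : ∀ j, y j ≠ 1/2 := fun j => by rw [hy]; exact hx2 (σ j)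
  -- cardinality is permutation invariant
  have hcard : (Finset.univ.filter (fun j => y j < 1/2)).card = l := by
    rw [hl]
    apply Finset.card_bij' (fun j _ => σ j) (fun j _ => σ.symm j)
    · intro j hj
      simp only [Finset.mem_filter, Finset.mem_univ, true_and] at hj ⊢
      rw [hy] at hj; exact hj
    · intro j hj
      simp only [Finset.mem_filter, Finset.mem_univ, true_and] at hj ⊢
      rw [hy]; simpa using hj
    · intro j _; simp
    · intro j _; simp
  have hln : l ≤ n := by
    rw [← hcard]
    exact le_trans (Finset.card_filter_le _ _) (by simp)
  -- threshold characterization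
  have key : ∀ j : Fin n, y j < 1/2 ↔ (j : ℕ) < l := by
    intro j
    constructor
    · intro hj
      have hsub : Finset.Iic j ⊆ Finset.univ.filter (fun i => y i < 1/2) := by
        intro i hi
        simp only [Finset.mem_Iic] at hi
        simp only [Finset.mem_filter, Finset.mem_univ, true_and]
        exact lt_of_le_of_lt (hmono hi) hj
      have := Finset.card_le_card hsub
      rw [hcard, Fin.card_Iic] at this
      omega
    · intro hj
      by_contra hnot
      have hsub : Finset.univ.filter (fun i => y i < 1/2) ⊆ Finset.Iio j := by
        intro i hi
        simp only [Finset.mem_filter, Finset.mem_univ, true_and] at hi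
        simp only [Finset.mem_Iio]
        by_contra hij
        exact hnot (lt_of_le_of_lt (hmono (not_lt.1 hij)) hi)
      have := Finset.card_le_card hsub
      rw [hcard, Fin.card_Iio] at this
      omega
  have key2 : ∀ j : Fin n, 1/2 < y j ↔ l ≤ (j : ℕ) := by
    intro j
    rcases lt_or_gt_of_ne (hyne j) with h | h
    · constructor
      · intro h'; linarith
      · intro h'; exact absurd ((key j).1 h) (by omega)
    · exact ⟨fun _ => not_lt.1 fun hlt => absurd ((key j).2 hlt) (not_lt.2 h.le),
        fun _ => h⟩
  intro k
  unfold lowHigh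
  by_cases hk0 : (k : ℕ) = 0
  · have hkn : (k : ℕ) < n := by omega
    rw [dif_pos hk0, dif_pos hkn,
      harden_dAnd 1 _ zero_le_one le_rfl (hy0 _) (hy1 _) (by norm_num) (hyne _)]
    apply if_congr _ rfl rfl
    rw [key2]
    show (1:ℝ)/2 < 1 ∧ l ≤ (k:ℕ) ↔ (k:ℕ) = l
    constructor
    · rintro ⟨_, h⟩; omega
    · intro h
      exact ⟨by norm_num, by omega⟩
  · by_cases hkn : (k : ℕ) < n
    · rw [dif_neg hk0, dif_pos hkn,
        harden_dAnd _ _ (by linarith [hy1 ⟨(k:ℕ)-1, by omega⟩])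
          (by linarith [hy0 ⟨(k:ℕ)-1, by omega⟩]) (hy0 _) (hy1 _)
          (fun h => hyne ⟨(k:ℕ)-1, by omega⟩ (by linarith)) (hyne _)]
      apply if_congr _ rfl rfl
      have h1 : (1:ℝ)/2 < 1 - y ⟨(k:ℕ)-1, by omega⟩ ↔ y ⟨(k:ℕ)-1, by omega⟩ < 1/2 := by
        constructor <;> intro <;> linarith
      rw [h1, key, key2]
      show (k:ℕ) - 1 < l ∧ l ≤ (k:ℕ) ↔ (k:ℕ) = l
      omega
    · have hkeq : (k : ℕ) = n := by have := k.isLt; omega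
      rw [dif_neg hk0, dif_neg hkn,
        harden_dAnd _ 1 (by linarith [hy1 ⟨(k:ℕ)-1, by omega⟩])
          (by linarith [hy0 ⟨(k:ℕ)-1, by omega⟩]) zero_le_one le_rfl
          (fun h => hyne ⟨(k:ℕ)-1, by omega⟩ (by linarith)) (by norm_num)]
      apply if_congr _ rfl rfl
      have h1 : (1:ℝ)/2 < 1 - y ⟨(k:ℕ)-1, by omega⟩ ↔ y ⟨(k:ℕ)-1, by omega⟩ < 1/2 := by
        constructor <;> intro <;> linarith
      constructor
      · rintro ⟨ha, _⟩
        have := (key _).1 (h1.1 ha)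
        have h2 : (k:ℕ) - 1 < l := this
        omega
      · intro h
        refine ⟨h1.2 ((key _).2 ?_), by norm_num⟩
        show (k:ℕ) - 1 < l
        omega
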